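/- (Lemma 1, second part, beam splitter case.) Let a parallel gate configuration have path i entering a beam splitter, i.e., i ∈ {s,t} ∈ B (so in particular i ∉ D), let z ∈ ℂ^N, write w = Wz, and assume |w_s|² + |w_t|² ≠ 0. Then for every p ∈ [z]_i there exist p_s ∈ [w]_s and p_t ∈ [w]_t such that the output measure satisfies pK = (|w_s|²/(|w_s|²+|w_t|²))·p_s + (|w_t|²/(|w_s|²+|w_t|²))·p_t. -/

import Mathlib

open MeasureTheory
open scoped Classical

namespace SPI

/-! ## Ontology -/

/-- Ontic states: particle position `q`, field amplitudes `u`, field strengths `τ`. -/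
abbrev Lam (N : ℕ) := Fin N × (Fin N → ℂ) × (Fin N → ℝ)

/-- The constraint region of `Λ`: `|u j| ≤ 1` and `τ j ∈ [0,1]`. -/
def onticSet (N : ℕ) : Set (Lam N) :=
  {l | (∀ j, ‖l.2.1 j‖ ≤ 1) ∧ ∀ j, l.2.2 j ∈ Set.Icc (0 : ℝ) 1}

/-- Highest field strength `τ_max`. -/
noncomputable def tmax {N : ℕ} (τ : Fin N → ℝ) : ℝ := ⨆ j, τ j

/-- `Δ_τ u` : the amplitude vector with only maximal-strength entries retained. -/
noncomputable def deltaVec {N : ℕ} (τ : Fin N → ℝ) (u : Fin N → ℂ) : Fin N → ℂ :=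
  fun j => if τ j = tmax τ then u j else 0

/-- Proportionality `z ∼ z'` of complex vectors (a nonzero multiple). -/
def Propto {N : ℕ} (v w : Fin N → ℂ) : Prop := ∃ α : ℂ, α ≠ 0 ∧ v = α • w

/-- The subset `Λ_z^i` of the ontic state space. -/
def lamSet {N : ℕ} (z : Fin N → ℂ) (i : Fin N) : Set (Lam N) :=
  {l | l.1 = i ∧ l.2.2 i = tmax l.2.2 ∧ 0 < tmax l.2.2 ∧ Propto (deltaVec l.2.2 l.2.1) z}

/-- Membership in the auxiliary class `[z]_i`: a (Borel) probability measure giving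
full measure to `Λ_z^i`. -/
def memClassI {N : ℕ} (z : Fin N → ℂ) (i : Fin N) (μ : Measure (Lam N)) : Prop :=
  IsProbabilityMeasure μ ∧ μ (lamSet z i) = 1

/-- Membership in the class `[z]` (for a unit vector `z`): mixtures `∑ |z i|² • pᵢ`
with `pᵢ ∈ [z]_i` (terms with `z i = 0` omitted). -/
def memClass {N : ℕ} (z : Fin N → ℂ) (μ : Measure (Lam N)) : Prop :=
  ∃ f : Fin N → Measure (Lam N),
    (∀ i, z i ≠ 0 → memClassI z i (f i)) ∧
    μ = ∑ i, ENNReal.ofReal (‖z i‖ ^ 2) • f i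

/-- The `j`-th standard basis vector of `ℂ^N`. -/
def eVec {N : ℕ} (j : Fin N) : Fin N → ℂ := fun m => if m = j then 1 else 0

/-! ## Parallel gate configurations -/

/-- A parallel gate configuration: a partition of the paths `{1,…,N}` into free paths `Fr`,
detector paths `De`, phase-shifter paths `Sh` (phases `ω`), and a collection `Bs` of pairwise
disjoint pairs (beam splitters with constants `R`, `T`, `R + T = 1`). -/
structure Config (N : ℕ) where
  Fr : Finset (Fin N)
  De : Finset (Fin N)
  Sh : Finset (Fin N)
  ω : Fin N → ℝ
  Bs : Finset (Fin N × Fin N)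
  R : Fin N × Fin N → ℝ
  T : Fin N × Fin N → ℝ
  hR : ∀ p ∈ Bs, 0 ≤ R p
  hT : ∀ p ∈ Bs, 0 ≤ T p
  hRT : ∀ p ∈ Bs, R p + T p = 1
  hst : ∀ p ∈ Bs, p.1 ≠ p.2
  hBB : ∀ p ∈ Bs, ∀ q ∈ Bs, p ≠ q → p.1 ≠ q.1 ∧ p.1 ≠ q.2 ∧ p.2 ≠ q.1 ∧ p.2 ≠ q.2
  hFD : Disjoint Fr De
  hFS : Disjoint Fr Sh
  hDS : Disjoint De Sh
  hBdisj : ∀ p ∈ Bs, p.1 ∉ Fr ∧ p.2 ∉ Fr ∧ p.1 ∉ De ∧ p.2 ∉ De ∧ p.1 ∉ Sh ∧ p.2 ∉ Sh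
  hcover : ∀ m : Fin N, m ∈ Fr ∨ m ∈ De ∨ m ∈ Sh ∨ ∃ p ∈ Bs, m = p.1 ∨ m = p.2

/-- Path `m` enters some beam splitter of the configuration. -/
def inB {N : ℕ} (c : Config N) (m : Fin N) : Prop := ∃ p ∈ c.Bs, m = p.1 ∨ m = p.2

/-- The new field strengths `τ'` produced by the parallel gates. -/
noncomputable def newTau {N : ℕ} (c : Config N) (q : Fin N) (τ : Fin N → ℝ) : Fin N → ℝ :=
  fun m =>
    if m ∈ c.De then (if q = m then 1 else 0)
    else if hm : inB c m then max (τ hm.choose.1) (τ hm.choose.2) / 2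
    else τ m / 2

/-- The new field amplitudes `u'` produced by the parallel gates. -/
noncomputable def newAmp {N : ℕ} (c : Config N) (q : Fin N) (u : Fin N → ℂ) (τ : Fin N → ℝ) :
    Fin N → ℂ :=
  fun m =>
    if m ∈ c.De then (if q = m then 1 else u m)
    else if m ∈ c.Sh then Complex.exp (Complex.I * (c.ω m : ℂ)) * u m
    else if hm : inB c m then
      (let p := hm.choose
       let ts := max (τ p.1) (τ p.2)
       let us : ℂ := if τ p.1 = ts then u p.1 else 0
       let ut : ℂ := if τ p.2 = ts then u p.2 else 0
       if m = p.1 then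
         Complex.I * (Real.sqrt (c.R p) : ℂ) * us + (Real.sqrt (c.T p) : ℂ) * ut
       else
         (Real.sqrt (c.T p) : ℂ) * us + Complex.I * (Real.sqrt (c.R p) : ℂ) * ut)
    else u m

/-- One step of the dynamics: the Markov kernel `K` of the parallel gate configuration,
as a measure-valued map on ontic states. -/
noncomputable def step {N : ℕ} (c : Config N) (l : Lam N) : Measure (Lam N) :=
  let q := l.1
  let u' := newAmp c q l.2.1 l.2.2
  let τ' := newTau c q l.2.2
  if hq : inB c q then
    (let p := hq.choose
     let a := ‖u' p.1‖ ^ 2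
     let b := ‖u' p.2‖ ^ 2
     if a + b = 0 then Measure.dirac (q, u', τ')
     else ENNReal.ofReal (a / (a + b)) • Measure.dirac (p.1, u', τ')
        + ENNReal.ofReal (b / (a + b)) • Measure.dirac (p.2, u', τ'))
  else Measure.dirac (q, u', τ')

/-- The output measure `pK` of the kernel applied to an input measure `p`. -/
noncomputable def out {N : ℕ} (c : Config N) (μ : Measure (Lam N)) : Measure (Lam N) :=
  μ.bind (step c)

/-! ## Interferometric matrices -/

/-- The projector `P_j` onto component `j`. -/
def Pmat {N : ℕ} (j : Fin N) : Matrix (Fin N) (Fin N) ℂ :=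
  Matrix.diagonal (fun a => if a = j then 1 else 0)

/-- The phase-shifter matrix `S_k(ω)`. -/
noncomputable def Smat {N : ℕ} (k : Fin N) (ω : ℝ) : Matrix (Fin N) (Fin N) ℂ :=
  Matrix.diagonal (fun a => if a = k then Complex.exp (Complex.I * (ω : ℂ)) else 1)

/-- The beam-splitter matrix `B_st(R,T)`: identity outside `{s,t}` and
`[[i√R, √T],[√T, i√R]]` on components `{s,t}`. -/
noncomputable def Bmat {N : ℕ} (s t : Fin N) (R T : ℝ) : Matrix (Fin N) (Fin N) ℂ :=
  Matrix.of fun a b =>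
    if a = s then
      (if b = s then Complex.I * (Real.sqrt R : ℂ) else if b = t then (Real.sqrt T : ℂ) else 0)
    else if a = t then
      (if b = s then (Real.sqrt T : ℂ) else if b = t then Complex.I * (Real.sqrt R : ℂ) else 0)
    else if a = b then 1 else 0

/-- The matrix `Δ_τ` selecting the components of maximal strength. -/
noncomputable def Dmat {N : ℕ} (τ : Fin N → ℝ) : Matrix (Fin N) (Fin N) ℂ :=
  Matrix.diagonal (fun j => if τ j = tmax τ then 1 else 0)

/-- The matrix `Δ^(st)_τ` with `δ_{τ_s,max(τ_s,τ_t)}`, `δ_{τ_t,max(τ_s,τ_t)}` at `s`, `t`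
and `1` elsewhere on the diagonal. -/
noncomputable def DmatST {N : ℕ} (τ : Fin N → ℝ) (s t : Fin N) : Matrix (Fin N) (Fin N) ℂ :=
  Matrix.diagonal (fun m =>
    if m = s then (if τ s = max (τ s) (τ t) then 1 else 0)
    else if m = t then (if τ t = max (τ s) (τ t) then 1 else 0)
    else 1)

/-! ## Commutation lemmas -/

lemma commute_diagonal {N : ℕ} (d e : Fin N → ℂ) :
    Commute (Matrix.diagonal d) (Matrix.diagonal e) := by
  have h : (fun i => d i * e i) = fun i => e i * d i := funext fun i => mul_comm _ _
  show Matrix.diagonal d * Matrix.diagonal e = Matrix.diagonal e * Matrix.diagonal d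
  rw [Matrix.diagonal_mul_diagonal, Matrix.diagonal_mul_diagonal, h]

lemma oneSubP_diagonal {N : ℕ} (j : Fin N) :
    (1 : Matrix (Fin N) (Fin N) ℂ) - Pmat j
      = Matrix.diagonal (fun a => 1 - if a = j then 1 else 0) := by
  rw [Pmat, ← Matrix.diagonal_one, Matrix.diagonal_sub]

lemma commute_oneSubP {N : ℕ} (j j' : Fin N) :
    Commute ((1 : Matrix (Fin N) (Fin N) ℂ) - Pmat j) (1 - Pmat j') := by
  rw [oneSubP_diagonal, oneSubP_diagonal]; exact commute_diagonal _ _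

/-- A matrix which differs from the identity only inside the block `{s,t} × {s,t}`. -/
def IsBlock {N : ℕ} (s t : Fin N) (M : Matrix (Fin N) (Fin N) ℂ) : Prop :=
  ∀ a b, ¬((a = s ∨ a = t) ∧ (b = s ∨ b = t)) →
    M a b = (1 : Matrix (Fin N) (Fin N) ℂ) a b

lemma commute_of_isBlock {N : ℕ} {s t s' t' : Fin N} {M M' : Matrix (Fin N) (Fin N) ℂ}
    (hM : IsBlock s t M) (hM' : IsBlock s' t' M')
    (h1 : s ≠ s') (h2 : s ≠ t') (h3 : t ≠ s') (h4 : t ≠ t') : Commute M M' := by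
  have hrow : ∀ a b : Fin N, a ≠ s → a ≠ t → (M - 1) a b = 0 := by
    intro a b ha hb
    have h := hM a b (by tauto)
    simp [Matrix.sub_apply, h]
  have hcol : ∀ a b : Fin N, b ≠ s → b ≠ t → (M - 1) a b = 0 := by
    intro a b hb1 hb2
    have h := hM a b (by tauto)
    simp [Matrix.sub_apply, h]
  have hrow' : ∀ a b : Fin N, a ≠ s' → a ≠ t' → (M' - 1) a b = 0 := by
    intro a b ha hb
    have h := hM' a b (by tauto)
    simp [Matrix.sub_apply, h]
  have hcol' : ∀ a b : Fin N, b ≠ s' → b ≠ t' → (M' - 1) a b = 0 := by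
    intro a b hb1 hb2
    have h := hM' a b (by tauto)
    simp [Matrix.sub_apply, h]
  have hEE' : (M - 1) * (M' - 1) = 0 := by
    ext a b
    rw [Matrix.mul_apply, Matrix.zero_apply]
    apply Finset.sum_eq_zero
    intro k _
    by_cases hk : k = s ∨ k = t
    · have : (M' - 1) k b = 0 := by
        rcases hk with h | h
        · subst h; exact hrow' _ _ h1 h2
        · subst h; exact hrow' _ _ h3 h4
      rw [this, mul_zero]
    · push_neg at hk
      rw [hcol a k hk.1 hk.2, zero_mul]
  have hE'E : (M' - 1) * (M - 1) = 0 := by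
    ext a b
    rw [Matrix.mul_apply, Matrix.zero_apply]
    apply Finset.sum_eq_zero
    intro k _
    by_cases hk : k = s' ∨ k = t'
    · have : (M - 1) k b = 0 := by
        rcases hk with h | h
        · subst h; exact hrow _ _ (Ne.symm h1) (Ne.symm h3)
        · subst h; exact hrow _ _ (Ne.symm h2) (Ne.symm h4)
      rw [this, mul_zero]
    · push_neg at hk
      rw [hcol' a k hk.1 hk.2, zero_mul]
  have expand : ∀ A B : Matrix (Fin N) (Fin N) ℂ,
      A * B = (A - 1) * (B - 1) + A + B - 1 := by
    intro A B; noncomm_ring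
  unfold Commute SemiconjBy
  rw [expand M M', expand M' M, hEE', hE'E]
  abel

lemma isBlock_Bmat {N : ℕ} (s t : Fin N) (R T : ℝ) : IsBlock s t (Bmat s t R T) := by
  intro a b hab
  by_cases has : a = s ∨ a = t
  · have hbs : ¬(b = s ∨ b = t) := fun h => hab ⟨has, h⟩
    push_neg at hbs
    have hb : a ≠ b := by
      rcases has with h | h <;> subst h
      · exact fun hc => hbs.1 hc.symm
      · exact fun hc => hbs.2 hc.symm
    rw [Matrix.one_apply_ne hb]
    rcases has with h | h <;> subst h <;> simp [Bmat, hbs.1, hbs.2]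
  · push_neg at has
    simp [Bmat, Matrix.one_apply, has.1, has.2]

lemma isBlock_one_sub_Pmat {N : ℕ} (j : Fin N) :
    IsBlock j j ((1 : Matrix (Fin N) (Fin N) ℂ) - Pmat j) := by
  intro a b hab
  have haj : a ≠ j ∨ b ≠ j := by tauto
  rw [oneSubP_diagonal]
  by_cases h : a = b
  · subst h
    have haj' : a ≠ j := by tauto
    simp [Matrix.diagonal_apply_eq, Matrix.one_apply_eq, haj']
  · simp [Matrix.diagonal_apply_ne _ h, Matrix.one_apply_ne h]

lemma isBlock_Smat {N : ℕ} (k : Fin N) (ω : ℝ) : IsBlock k k (Smat k ω) := by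
  intro a b hab
  have haj : a ≠ k ∨ b ≠ k := by tauto
  by_cases h : a = b
  · subst h
    have haj' : a ≠ k := by tauto
    simp [Smat, Matrix.diagonal_apply_eq, Matrix.one_apply_eq, haj']
  · simp [Smat, Matrix.diagonal_apply_ne _ h, Matrix.one_apply_ne h]

lemma isBlock_mul_diag {N : ℕ} (s t : Fin N) (M : Matrix (Fin N) (Fin N) ℂ)
    (hM : IsBlock s t M) (d : Fin N → ℂ) (hd : ∀ m, m ≠ s → m ≠ t → d m = 1) :
    IsBlock s t (M * Matrix.diagonal d) := by
  intro a b hab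
  rw [Matrix.mul_diagonal, hM a b hab]
  by_cases h : a = b
  · subst h
    have h1 : a ≠ s := fun hc => hab ⟨Or.inl hc, Or.inl hc⟩
    have h2 : a ≠ t := fun hc => hab ⟨Or.inr hc, Or.inr hc⟩
    rw [Matrix.one_apply_eq, hd a h1 h2, mul_one]
  · rw [Matrix.one_apply_ne h, zero_mul]

lemma isBlock_BmatD {N : ℕ} (s t : Fin N) (R T : ℝ) (τ : Fin N → ℝ) :
    IsBlock s t (Bmat s t R T * DmatST τ s t) := by
  unfold DmatST
  refine isBlock_mul_diag s t _ (isBlock_Bmat s t R T) _ ?_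
  intro m h1 h2
  simp [h1, h2]

/-! ## The matrix `W` of the configuration -/

noncomputable def Dprod {N : ℕ} (c : Config N) : Matrix (Fin N) (Fin N) ℂ :=
  c.De.noncommProd (fun j => 1 - Pmat j) (fun _ _ _ _ _ => commute_oneSubP _ _)

noncomputable def Sprod {N : ℕ} (c : Config N) : Matrix (Fin N) (Fin N) ℂ :=
  c.Sh.noncommProd (fun k => Smat k (c.ω k)) (fun _ _ _ _ _ => commute_diagonal _ _)

noncomputable def Bprod {N : ℕ} (c : Config N) : Matrix (Fin N) (Fin N) ℂ :=
  c.Bs.noncommProd (fun p => Bmat p.1 p.2 (c.R p) (c.T p))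
    (fun p hp q hq hpq => by
      obtain ⟨h1, h2, h3, h4⟩ := c.hBB p hp q hq hpq
      exact commute_of_isBlock (isBlock_Bmat _ _ _ _) (isBlock_Bmat _ _ _ _) h1 h2 h3 h4)

/-- The matrix `W = ∏_{j∈D}(1−P_j) ∏_{k∈S} S_k(ω_k) ∏_{{s,t}∈B} B_st(R_st,T_st)`. -/
noncomputable def Wmat {N : ℕ} (c : Config N) : Matrix (Fin N) (Fin N) ℂ :=
  Dprod c * Sprod c * Bprod c

/-- The vector `W z`. -/
noncomputable def Wvec {N : ℕ} (c : Config N) (z : Fin N → ℂ) : Fin N → ℂ :=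
  (Wmat c).mulVec z

/-- The product `∏_{{s,t}∈B} (B_st(R_st,T_st) Δ^(st)_τ)`. -/
noncomputable def BDprod {N : ℕ} (c : Config N) (τ : Fin N → ℝ) : Matrix (Fin N) (Fin N) ℂ :=
  c.Bs.noncommProd (fun p => Bmat p.1 p.2 (c.R p) (c.T p) * DmatST τ p.1 p.2)
    (fun p hp q hq hpq => by
      obtain ⟨h1, h2, h3, h4⟩ := c.hBB p hp q hq hpq
      exact commute_of_isBlock (isBlock_BmatD _ _ _ _ _) (isBlock_BmatD _ _ _ _ _) h1 h2 h3 h4)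

/-!
On `Λ_z^i` the gates halve every strength, so the entries of maximal strength after the gates
are exactly those fed only by entries of maximal strength before; on those entries the gates act
linearly, as `W`, and the amplitude of `z` outside them is zero. Hence every state of `Λ_z^i` is
sent to a state with particle on `s` or `t` lying in `Λ_{Wz}^s` resp. `Λ_{Wz}^t`, and the branching
probabilities `|α w_s|² : |α w_t|²` do not depend on the scale `α`. So `pK` is the corresponding
mixture of the two push-forwards of `p`.
-/

section Measures

variable {α β : Type*} [MeasurableSpace α] [MeasurableSpace β]

lemma map_apply_eq_one_of_mapsTo {μ : Measure α} [IsProbabilityMeasure μ] {f : α → β}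
    (hf : Measurable f) {s : Set α} {t : Set β} (hs : μ s = 1) (hst : Set.MapsTo f s t) :
    μ.map f t = 1 :=
  le_antisymm prob_le_one <| hs ▸ (measure_mono hst).trans (Measure.le_map_apply hf.aemeasurable t)

lemma bind_eq_add_map_of_ae {μ : Measure α} {κ : α → Measure β} {f g : α → β}
    (hf : Measurable f) (hg : Measurable g) (a b : ENNReal)
    (h : ∀ᵐ x ∂μ, κ x = a • Measure.dirac (f x) + b • Measure.dirac (g x)) :
    μ.bind κ = a • μ.map f + b • μ.map g := by
  have hcoe : ∀ {f : α → β}, Measurable f → ∀ {S}, MeasurableSet S →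
      Measurable fun x => Measure.dirac (f x) S :=
    fun hf _ hS => (Measure.measurable_coe hS).comp (Measure.measurable_dirac.comp hf)
  have hmap : ∀ {f : α → β}, Measurable f → ∀ {S}, MeasurableSet S →
      ∫⁻ x, Measure.dirac (f x) S ∂μ = μ.map f S := fun hf _ hS => by
    rw [← Measure.bind_dirac_eq_map μ hf]
    exact (Measure.bind_apply hS (Measure.measurable_dirac.comp hf).aemeasurable).symm
  have hmeas : Measurable fun x => a • Measure.dirac (f x) + b • Measure.dirac (g x) :=
    Measure.measurable_of_measurable_coe _ fun T hT => by
      simp only [Measure.add_apply, Measure.smul_apply, smul_eq_mul]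
      exact ((hcoe hf hT).const_mul a).add ((hcoe hg hT).const_mul b)
  ext S hS
  simp only [Measure.bind_congr_right h, Measure.bind_apply hS hmeas.aemeasurable,
    Measure.add_apply, Measure.smul_apply, smul_eq_mul]
  rw [lintegral_add_left ((hcoe hf hS).const_mul a), lintegral_const_mul a (hcoe hf hS),
    lintegral_const_mul b (hcoe hg hS), hmap hf hS, hmap hg hS]

end Measures

section Measurability

variable {N : ℕ}

@[fun_prop]
lemma measurable_ite_eq {α : Type*} [MeasurableSpace α] {f g : α → ℝ} {h : α → ℂ}
    (hf : Measurable f) (hg : Measurable g) (hh : Measurable h) :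
    Measurable fun x => if f x = g x then h x else 0 :=
  Measurable.ite (measurableSet_eq_fun hf hg) hh measurable_const

@[fun_prop]
lemma measurable_tmax : Measurable (tmax : (Fin N → ℝ) → ℝ) :=
  Measurable.iSup measurable_pi_apply

lemma measurable_deltaVec : Measurable fun l : Lam N => deltaVec l.2.2 l.2.1 :=
  measurable_pi_lambda _ fun j => by unfold deltaVec; fun_prop

lemma measurableSet_setOf_propto (z : Fin N → ℂ) :
    MeasurableSet {v : Fin N → ℂ | Propto v z} := by
  by_cases hz : z = 0
  · convert measurableSet_singleton (0 : Fin N → ℂ)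
    ext v
    simp [Propto, hz, exists_ne]
  · have : {v : Fin N → ℂ | Propto v z} = ((ℂ ∙ z : Submodule ℂ (Fin N → ℂ)) : Set _) \ {0} := by
      ext v
      simp only [Propto, Set.mem_ofPred_eq, Set.mem_sdiff, SetLike.mem_coe,
        Submodule.mem_span_singleton, Set.mem_singleton_iff]
      constructor
      · rintro ⟨α, hα, rfl⟩
        exact ⟨⟨α, rfl⟩, smul_ne_zero hα hz⟩
      · rintro ⟨⟨α, rfl⟩, hv⟩
        exact ⟨α, left_ne_zero_of_smul hv, rfl⟩
    rw [this]
    exact (Submodule.closed_of_finiteDimensional _).measurableSet.diff (measurableSet_singleton 0)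

lemma measurableSet_lamSet (z : Fin N → ℂ) (i : Fin N) : MeasurableSet (lamSet z i) := by
  simp only [lamSet, Set.ofPred_and]
  exact (measurableSet_eq_fun measurable_fst measurable_const).inter <|
    (measurableSet_eq_fun (by fun_prop) (by fun_prop)).inter <|
      (measurableSet_lt measurable_const (by fun_prop)).inter <|
        measurable_deltaVec (measurableSet_setOf_propto z)

lemma measurable_newAmp (c : Config N) :
    Measurable fun l : Lam N => newAmp c l.1 l.2.1 l.2.2 := by
  refine measurable_pi_lambda _ fun m => measurable_from_prod_countable_right fun q => ?_
  dsimp only [newAmp]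
  split_ifs <;> fun_prop

lemma measurable_newTau (c : Config N) :
    Measurable fun l : Lam N => newTau c l.1 l.2.2 := by
  refine measurable_pi_lambda _ fun m => measurable_from_prod_countable_right fun q => ?_
  dsimp only [newTau]
  split_ifs <;> fun_prop

end Measurability

section Matrices

open Matrix

variable {N : ℕ} {s t m : Fin N} {M : Matrix (Fin N) (Fin N) ℂ}

lemma IsBlock.mulVec_apply_of_ne (hM : IsBlock s t M) (hs : m ≠ s) (ht : m ≠ t)
    (v : Fin N → ℂ) : (M *ᵥ v) m = v m := by
  have hrow : (fun b => M m b) = fun b => (1 : Matrix (Fin N) (Fin N) ℂ) m b :=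
    funext fun b => hM m b (by tauto)
  rw [mulVec, hrow, ← mulVec, one_mulVec]

lemma IsBlock.mulVec_apply_congr (hM : IsBlock s t M) (hm : m = s ∨ m = t) {v v' : Fin N → ℂ}
    (hs : v s = v' s) (ht : v t = v' t) : (M *ᵥ v) m = (M *ᵥ v') m := by
  show ∑ b, M m b * v b = ∑ b, M m b * v' b
  refine Finset.sum_congr rfl fun b _ => ?_
  by_cases hb : b = s ∨ b = t
  · rcases hb with rfl | rfl
    · rw [hs]
    · rw [ht]
  · have hmb : m ≠ b := by rintro rfl; exact hb hm
    rw [hM m b (by tauto), one_apply_ne hmb, zero_mul, zero_mul]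

variable {ι : Type*} {F : Finset ι} {A : ι → Matrix (Fin N) (Fin N) ℂ}
  {hA : (F : Set ι).Pairwise fun a b => Commute (A a) (A b)} {s' t' : ι → Fin N}

lemma noncommProd_mulVec_apply_of_isBlock (hblock : ∀ k ∈ F, IsBlock (s' k) (t' k) (A k))
    (hm : ∀ k ∈ F, m ≠ s' k ∧ m ≠ t' k) (v : Fin N → ℂ) :
    (F.noncommProd A hA *ᵥ v) m = v m :=
  Finset.noncommProd_induction F A hA (fun B => ∀ v, (B *ᵥ v) m = v m)
    (fun B B' hB hB' v => by rw [← mulVec_mulVec, hB, hB'])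
    (fun v => by rw [one_mulVec])
    (fun k hk => (hblock k hk).mulVec_apply_of_ne (hm k hk).1 (hm k hk).2) v

lemma noncommProd_mulVec_apply_of_mem (hblock : ∀ k ∈ F, IsBlock (s' k) (t' k) (A k))
    {k : ι} (hk : k ∈ F)
    (hdisj : ∀ k' ∈ F, k ≠ k' → s' k ≠ s' k' ∧ s' k ≠ t' k' ∧ t' k ≠ s' k' ∧ t' k ≠ t' k')
    (hm : m = s' k ∨ m = t' k) (v : Fin N → ℂ) :
    (F.noncommProd A hA *ᵥ v) m = (A k *ᵥ v) m := by
  rw [← F.mul_noncommProd_erase hk, ← mulVec_mulVec]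
  have hrest : ∀ j, (j = s' k ∨ j = t' k) →
      ((F.erase k).noncommProd A (hA.mono (Finset.coe_subset.2 (F.erase_subset k))) *ᵥ v) j
        = v j := by
    intro j hj
    refine noncommProd_mulVec_apply_of_isBlock
      (fun k' hk' => hblock k' (Finset.mem_of_mem_erase hk')) (fun k' hk' => ?_) v
    obtain ⟨h1, h2, h3, h4⟩ :=
      hdisj k' (Finset.mem_of_mem_erase hk') (Finset.ne_of_mem_erase hk').symm
    rcases hj with rfl | rfl <;> tauto
  exact (hblock k hk).mulVec_apply_congr hm (hrest _ (Or.inl rfl)) (hrest _ (Or.inr rfl))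

lemma Bmat_mulVec_apply (hst : s ≠ t) (R T : ℝ) (v : Fin N → ℂ) :
    (Bmat s t R T *ᵥ v) s = Complex.I * Real.sqrt R * v s + Real.sqrt T * v t ∧
      (Bmat s t R T *ᵥ v) t = Real.sqrt T * v s + Complex.I * Real.sqrt R * v t := by
  have hsum : ∀ a, (a = s ∨ a = t) →
      (Bmat s t R T *ᵥ v) a = Bmat s t R T a s * v s + Bmat s t R T a t * v t :=
    fun a ha => Fintype.sum_eq_add s t hst fun b hb => by
      rcases ha with rfl | rfl <;> simp [Bmat, hb.1, hb.2]
  rw [hsum s (Or.inl rfl), hsum t (Or.inr rfl)]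
  simp [Bmat, hst.symm]

end Matrices

section Configurations

open Matrix

variable {N : ℕ} {c : Config N} {p : Fin N × Fin N} {q m : Fin N}

lemma inB.choose_eq (hm : inB c m) (hp : p ∈ c.Bs) (hmp : m = p.1 ∨ m = p.2) :
    hm.choose = p := by
  obtain ⟨hp', hmp'⟩ := hm.choose_spec
  by_contra hne
  obtain ⟨h1, h2, h3, h4⟩ := c.hBB _ hp' p hp hne
  grind

lemma notMem_De_of_mem_pair (hp : p ∈ c.Bs) (hm : m = p.1 ∨ m = p.2) : m ∉ c.De := by
  obtain ⟨-, -, h1, h2, -, -⟩ := c.hBdisj p hp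
  rcases hm with rfl | rfl <;> assumption

lemma notMem_Sh_of_mem_pair (hp : p ∈ c.Bs) (hm : m = p.1 ∨ m = p.2) : m ∉ c.Sh := by
  obtain ⟨-, -, -, -, h1, h2⟩ := c.hBdisj p hp
  rcases hm with rfl | rfl <;> assumption

noncomputable def shifterPhase (c : Config N) (m : Fin N) : ℂ :=
  if m ∈ c.Sh then Complex.exp (Complex.I * (c.ω m : ℂ)) else 1

lemma Dprod_mulVec_apply (v : Fin N → ℂ) :
    (Dprod c *ᵥ v) m = if m ∈ c.De then 0 else v m := by
  split_ifs with hm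
  · calc (Dprod c *ᵥ v) m = ((1 - Pmat m) *ᵥ v) m :=
          noncommProd_mulVec_apply_of_mem (fun j _ => isBlock_one_sub_Pmat j) hm
            (fun _ _ h => ⟨h, h, h, h⟩) (Or.inl rfl) v
      _ = 0 := by simp [Pmat, sub_mulVec, mulVec_diagonal]
  · exact noncommProd_mulVec_apply_of_isBlock (fun j _ => isBlock_one_sub_Pmat j)
      (fun j hj => have h := (ne_of_mem_of_not_mem hj hm).symm; ⟨h, h⟩) v

lemma Sprod_mulVec_apply (v : Fin N → ℂ) : (Sprod c *ᵥ v) m = shifterPhase c m * v m := by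
  unfold shifterPhase
  split_ifs with hm
  · calc (Sprod c *ᵥ v) m = (Smat m (c.ω m) *ᵥ v) m :=
          noncommProd_mulVec_apply_of_mem (fun k _ => isBlock_Smat k _) hm
            (fun _ _ h => ⟨h, h, h, h⟩) (Or.inl rfl) v
      _ = _ := by simp [Smat, mulVec_diagonal]
  · rw [one_mul]
    exact noncommProd_mulVec_apply_of_isBlock (fun k _ => isBlock_Smat k _)
      (fun k hk => have h := (ne_of_mem_of_not_mem hk hm).symm; ⟨h, h⟩) v

lemma Bprod_mulVec_apply_of_mem_pair (hp : p ∈ c.Bs) (hm : m = p.1 ∨ m = p.2)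
    (v : Fin N → ℂ) : (Bprod c *ᵥ v) m = (Bmat p.1 p.2 (c.R p) (c.T p) *ᵥ v) m :=
  noncommProd_mulVec_apply_of_mem (fun _ _ => isBlock_Bmat _ _ _ _) hp (c.hBB p hp) hm v

lemma Bprod_mulVec_apply_of_not_inB (hm : ¬ inB c m) (v : Fin N → ℂ) :
    (Bprod c *ᵥ v) m = v m :=
  noncommProd_mulVec_apply_of_isBlock (fun _ _ => isBlock_Bmat _ _ _ _)
    (fun p hp => ⟨fun h => hm ⟨p, hp, Or.inl h⟩, fun h => hm ⟨p, hp, Or.inr h⟩⟩) v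

lemma Wvec_apply (z : Fin N → ℂ) (m : Fin N) :
    Wvec c z m = if m ∈ c.De then 0 else shifterPhase c m * (Bprod c *ᵥ z) m := by
  rw [Wvec, Wmat, ← mulVec_mulVec, ← mulVec_mulVec, Dprod_mulVec_apply, Sprod_mulVec_apply]

lemma Wvec_of_mem_De (hm : m ∈ c.De) (z : Fin N → ℂ) : Wvec c z m = 0 := by
  rw [Wvec_apply, if_pos hm]

lemma Wvec_of_mem_pair (hp : p ∈ c.Bs) (hm : m = p.1 ∨ m = p.2) (z : Fin N → ℂ) :
    Wvec c z m = (Bmat p.1 p.2 (c.R p) (c.T p) *ᵥ z) m := by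
  rw [Wvec_apply, if_neg (notMem_De_of_mem_pair hp hm), shifterPhase,
    if_neg (notMem_Sh_of_mem_pair hp hm), one_mul, Bprod_mulVec_apply_of_mem_pair hp hm]

lemma Wvec_of_not_inB (hD : m ∉ c.De) (hB : ¬ inB c m) (z : Fin N → ℂ) :
    Wvec c z m = shifterPhase c m * z m := by
  rw [Wvec_apply, if_neg hD, Bprod_mulVec_apply_of_not_inB hB]

lemma newTau_of_mem_De (hm : m ∈ c.De) (hqm : q ≠ m) (τ : Fin N → ℝ) :
    newTau c q τ m = 0 := by
  simp [newTau, hm, hqm]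

lemma newTau_of_mem_pair (hp : p ∈ c.Bs) (hm : m = p.1 ∨ m = p.2) (τ : Fin N → ℝ) :
    newTau c q τ m = max (τ p.1) (τ p.2) / 2 := by
  have hB : inB c m := ⟨p, hp, hm⟩
  rw [newTau, if_neg (notMem_De_of_mem_pair hp hm), dif_pos hB, hB.choose_eq hp hm]

lemma newTau_of_not_inB (hD : m ∉ c.De) (hB : ¬ inB c m) (τ : Fin N → ℝ) :
    newTau c q τ m = τ m / 2 := by
  rw [newTau, if_neg hD, dif_neg hB]

lemma newAmp_of_mem_pair (hp : p ∈ c.Bs) (hm : m = p.1 ∨ m = p.2) (u : Fin N → ℂ)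
    (τ : Fin N → ℝ) :
    newAmp c q u τ m = (Bmat p.1 p.2 (c.R p) (c.T p) *ᵥ
      fun j => if τ j = max (τ p.1) (τ p.2) then u j else 0) m := by
  have hB : inB c m := ⟨p, hp, hm⟩
  obtain ⟨hs, ht⟩ := Bmat_mulVec_apply (c.hst p hp) (c.R p) (c.T p)
    fun j => if τ j = max (τ p.1) (τ p.2) then u j else 0
  rw [newAmp, if_neg (notMem_De_of_mem_pair hp hm), if_neg (notMem_Sh_of_mem_pair hp hm),
    dif_pos hB, hB.choose_eq hp hm]
  rcases hm with rfl | rfl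
  · rw [if_pos rfl, hs]
  · rw [if_neg (c.hst p hp).symm, ht]

lemma newAmp_of_not_inB (hD : m ∉ c.De) (hB : ¬ inB c m) (u : Fin N → ℂ) (τ : Fin N → ℝ) :
    newAmp c q u τ m = shifterPhase c m * u m := by
  unfold newAmp shifterPhase
  split_ifs <;> simp

end Configurations

section Gates

open Matrix

variable {N : ℕ} {c : Config N} {p : Fin N × Fin N} {q : Fin N} {u z : Fin N → ℂ}
  {τ : Fin N → ℝ} {α : ℂ}

lemma le_tmax (τ : Fin N → ℝ) (j : Fin N) : τ j ≤ tmax τ :=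
  le_ciSup (Set.finite_range τ).bddAbove j

lemma tmax_eq_of_forall_le {m : Fin N} (h : ∀ j, τ j ≤ τ m) : tmax τ = τ m :=
  have : Nonempty (Fin N) := ⟨m⟩
  le_antisymm (ciSup_le h) (le_tmax τ m)

lemma max_eq_tmax_of_mem_pair (hq : q = p.1 ∨ q = p.2) (hmax : τ q = tmax τ) :
    max (τ p.1) (τ p.2) = tmax τ := by
  refine le_antisymm (max_le (le_tmax τ _) (le_tmax τ _)) (hmax ▸ ?_)
  rcases hq with rfl | rfl
  exacts [le_max_left _ _, le_max_right _ _]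

lemma newTau_le (hq : q ∉ c.De) (h0 : 0 ≤ tmax τ) (m : Fin N) :
    newTau c q τ m ≤ tmax τ / 2 := by
  by_cases hD : m ∈ c.De
  · rw [newTau_of_mem_De hD (ne_of_mem_of_not_mem hD hq).symm]
    positivity
  by_cases hB : inB c m
  · obtain ⟨p, hp, hm⟩ := hB
    rw [newTau_of_mem_pair hp hm]
    gcongr
    exact max_le (le_tmax τ _) (le_tmax τ _)
  · rw [newTau_of_not_inB hD hB]
    gcongr
    exact le_tmax τ m

lemma newTau_self (hq : q ∉ c.De) (hmax : τ q = tmax τ) : newTau c q τ q = tmax τ / 2 := by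
  by_cases hB : inB c q
  · obtain ⟨p, hp, hqp⟩ := hB
    rw [newTau_of_mem_pair hp hqp, max_eq_tmax_of_mem_pair hqp hmax]
  · rw [newTau_of_not_inB hq hB, hmax]

lemma tmax_newTau (hq : q ∉ c.De) (hmax : τ q = tmax τ) (h0 : 0 ≤ tmax τ) :
    tmax (newTau c q τ) = tmax τ / 2 :=
  (tmax_eq_of_forall_le fun m => (newTau_self hq hmax).symm ▸ newTau_le hq h0 m).trans
    (newTau_self hq hmax)

lemma deltaVec_newAmp (hq : q ∉ c.De) (hmax : τ q = tmax τ) (hpos : 0 < tmax τ) (hα : α ≠ 0)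
    (h : deltaVec τ u = α • z) :
    deltaVec (newTau c q τ) (newAmp c q u τ) = α • Wvec c z := by
  have hsel : ∀ j, (if τ j = tmax τ then u j else 0) = α * z j := fun j => congrFun h j
  have hz : ∀ j, τ j ≠ tmax τ → z j = 0 := fun j hj => by
    simpa [hj, hα] using (hsel j).symm
  funext m
  simp only [deltaVec, tmax_newTau hq hmax hpos.le, Pi.smul_apply, smul_eq_mul]
  by_cases hD : m ∈ c.De
  · rw [newTau_of_mem_De hD (ne_of_mem_of_not_mem hD hq).symm, if_neg (half_pos hpos).ne,
      Wvec_of_mem_De hD, mul_zero]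
  by_cases hB : inB c m
  · obtain ⟨p, hp, hm⟩ := hB
    have hblock := isBlock_Bmat p.1 p.2 (c.R p) (c.T p)
    rw [newTau_of_mem_pair hp hm, Wvec_of_mem_pair hp hm, newAmp_of_mem_pair hp hm]
    by_cases hM : max (τ p.1) (τ p.2) = tmax τ
    · rw [if_pos (by rw [hM]), hM, ← smul_eq_mul, ← Pi.smul_apply α, ← mulVec_smul]
      exact hblock.mulVec_apply_congr hm (hsel _) (hsel _)
    · have hlt : ∀ j, (j = p.1 ∨ j = p.2) → τ j ≠ tmax τ := fun j hj hj' =>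
        hM (max_eq_tmax_of_mem_pair hj hj')
      rw [if_neg (fun h => hM (by linarith)),
        hblock.mulVec_apply_congr hm (v' := 0) (hz _ (hlt _ (Or.inl rfl)))
          (hz _ (hlt _ (Or.inr rfl))), mulVec_zero, Pi.zero_apply, mul_zero]
  · rw [newTau_of_not_inB hD hB, newAmp_of_not_inB hD hB, Wvec_of_not_inB hD hB]
    by_cases hm : τ m = tmax τ
    · have hum : u m = α * z m := by simpa [hm] using hsel m
      rw [if_pos (by rw [hm]), hum]
      ring
    · rw [if_neg (fun h => hm (by linarith)), hz m hm]
      ring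

end Gates

section Dynamics

variable {N : ℕ} {c : Config N} {s t i j : Fin N} {z : Fin N → ℂ} {l : Lam N}

noncomputable def gateOutput (c : Config N) (j : Fin N) (l : Lam N) : Lam N :=
  (j, newAmp c l.1 l.2.1 l.2.2, newTau c l.1 l.2.2)

lemma measurable_gateOutput (c : Config N) (j : Fin N) : Measurable (gateOutput c j) :=
  measurable_const.prodMk ((measurable_newAmp c).prodMk (measurable_newTau c))

lemma exists_amp_eq_smul_of_mem_lamSet (hl : l ∈ lamSet z i) :
    ∃ α ≠ 0, ∀ j, l.2.2 j = tmax l.2.2 → l.2.1 j = α * z j := by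
  obtain ⟨-, -, -, α, hα, h⟩ := hl
  exact ⟨α, hα, fun j hj => by simpa [deltaVec, hj] using congrFun h j⟩

lemma gateOutput_mem_lamSet (hp : (s, t) ∈ c.Bs) (hi : i = s ∨ i = t) (hl : l ∈ lamSet z i)
    (hj : j = s ∨ j = t) : gateOutput c j l ∈ lamSet (Wvec c z) j := by
  obtain ⟨q, u, τ⟩ := l
  obtain ⟨rfl, hmax, hpos, α, hα, h⟩ := hl
  have hq := notMem_De_of_mem_pair hp hi
  have htmax := tmax_newTau hq hmax hpos.le
  refine ⟨rfl, ?_, ?_, α, hα, deltaVec_newAmp hq hmax hpos hα h⟩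
  · show newTau c q τ j = tmax (newTau c q τ)
    rw [htmax, newTau_of_mem_pair hp hj, max_eq_tmax_of_mem_pair hi hmax]
  · show 0 < tmax (newTau c q τ)
    rw [htmax]
    positivity

lemma step_of_mem_pair (hp : (s, t) ∈ c.Bs) (hq : l.1 = s ∨ l.1 = t) {α x y : ℂ} (hα : α ≠ 0)
    (hs : newAmp c l.1 l.2.1 l.2.2 s = α * x) (ht : newAmp c l.1 l.2.1 l.2.2 t = α * y)
    (hxy : ‖x‖ ^ 2 + ‖y‖ ^ 2 ≠ 0) :
    step c l = ENNReal.ofReal (‖x‖ ^ 2 / (‖x‖ ^ 2 + ‖y‖ ^ 2)) • Measure.dirac (gateOutput c s l)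
      + ENNReal.ofReal (‖y‖ ^ 2 / (‖x‖ ^ 2 + ‖y‖ ^ 2)) • Measure.dirac (gateOutput c t l) := by
  have hB : inB c l.1 := ⟨(s, t), hp, hq⟩
  have hα2 : ‖α‖ ^ 2 ≠ 0 := by positivity
  simp only [step, dif_pos hB, hB.choose_eq hp hq, hs, ht, norm_mul, mul_pow, ← mul_add,
    mul_div_mul_left _ _ hα2, if_neg (mul_ne_zero hα2 hxy)]
  rfl

lemma step_eq_of_mem_lamSet (hp : (s, t) ∈ c.Bs) (hi : i = s ∨ i = t)
    (hw : ‖Wvec c z s‖ ^ 2 + ‖Wvec c z t‖ ^ 2 ≠ 0) (hl : l ∈ lamSet z i) :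
    step c l = ENNReal.ofReal (‖Wvec c z s‖ ^ 2 / (‖Wvec c z s‖ ^ 2 + ‖Wvec c z t‖ ^ 2)) •
        Measure.dirac (gateOutput c s l)
      + ENNReal.ofReal (‖Wvec c z t‖ ^ 2 / (‖Wvec c z s‖ ^ 2 + ‖Wvec c z t‖ ^ 2)) •
        Measure.dirac (gateOutput c t l) := by
  obtain ⟨α, hα, hamp⟩ :=
    exists_amp_eq_smul_of_mem_lamSet (gateOutput_mem_lamSet hp hi hl (Or.inl rfl))
  have hamp' : ∀ j, (j = s ∨ j = t) → newAmp c l.1 l.2.1 l.2.2 j = α * Wvec c z j :=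
    fun j hj => hamp j (gateOutput_mem_lamSet hp hi hl hj).2.1
  exact step_of_mem_pair hp (hl.1 ▸ hi) hα (hamp' s (Or.inl rfl)) (hamp' t (Or.inr rfl)) hw

end Dynamics

/-- Lemma 1, second part, beam splitter case. If `i ∈ {s,t} ∈ B`,
`w = Wz` and `|w_s|² + |w_t|² ≠ 0`, then for `p ∈ [z]_i` the output measure is the stated
mixture of some `p_s ∈ [w]_s` and `p_t ∈ [w]_t`. -/
theorem lemma1_beam_splitter {N : ℕ} (c : Config N) (s t i : Fin N)
    (hmem : (s, t) ∈ c.Bs) (hi : i = s ∨ i = t) (z : Fin N → ℂ)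
    (hw : ‖Wvec c z s‖ ^ 2 + ‖Wvec c z t‖ ^ 2 ≠ 0)
    (p : Measure (Lam N)) (hp : memClassI z i p) :
    ∃ ps pt : Measure (Lam N), memClassI (Wvec c z) s ps ∧ memClassI (Wvec c z) t pt ∧
      out c p =
        ENNReal.ofReal (‖Wvec c z s‖ ^ 2 /
            (‖Wvec c z s‖ ^ 2 + ‖Wvec c z t‖ ^ 2)) • ps +
        ENNReal.ofReal (‖Wvec c z t‖ ^ 2 /
            (‖Wvec c z s‖ ^ 2 + ‖Wvec c z t‖ ^ 2)) • pt := by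
  obtain ⟨hprob, hfull⟩ := hp
  have hae : ∀ᵐ l ∂p, l ∈ lamSet z i :=
    (ae_mem_iff_measure_eq (measurableSet_lamSet z i).nullMeasurableSet).2
      (by rw [hfull, measure_univ])
  have hmeas := measurable_gateOutput c
  have hclass : ∀ j, (j = s ∨ j = t) → memClassI (Wvec c z) j (p.map (gateOutput c j)) :=
    fun j hj => ⟨Measure.isProbabilityMeasure_map (hmeas j).aemeasurable,
      map_apply_eq_one_of_mapsTo (hmeas j) hfull fun _ hl => gateOutput_mem_lamSet hmem hi hl hj⟩
  exact ⟨_, _, hclass s (Or.inl rfl), hclass t (Or.inr rfl),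
    bind_eq_add_map_of_ae (hmeas s) (hmeas t) _ _
      (hae.mono fun _ hl => step_eq_of_mem_lamSet hmem hi hw hl)⟩

end SPI
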